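/- Let w ≥ 1 and h ≥ 1 be integers, and let d_1 ≥ d_2 ≥ ... ≥ d_{h+1} ≥ 0 be integers with d_i ≤ w for all i and Σ_{i=1}^{h+1} d_i = wh. Then there exists exactly one semistandard Young tableau of rectangular shape (w^h) (h rows of length w) with content (d_1, ..., d_{h+1}); moreover, in this tableau the only values appearing in row i are i and i+1. -/

import Mathlib

/-!
Column strictness together with the bound `h + 1` on the entries forces every entry of row `a`
of an `h × w` rectangle to be `a` or `a + 1`, so each row is `a` repeated `f a` times followed
by `a + 1` repeated `w - f a` times. The content of such a filling is `f 1`, then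
`f i + (w - f (i - 1))`, and finally `w - f h`; read from the top, these equations determine
`f`. Conversely the partial sums of `d` lie between `(a - 1) w` and `a w`, which makes the
solution `f` of these equations a weakly decreasing function with values in `[0, w]`, and the
corresponding filling is semistandard.
-/

/-- `IsSSYT R C r n c T` : the filling `T` (entry `T a b` in row `a`, column `b`,
both 1-indexed) is a semistandard Young tableau of the shape whose `a`-th row
(for `1 ≤ a ≤ R`) consists of the boxes `(a, b)` with `1 ≤ b ≤ r a` (where
`r a ≤ C`), with entries in `{1, ..., n}`, rows weakly increasing, columns
strictly increasing, and using exactly `c i` entries equal to `i` for each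
`1 ≤ i ≤ n`. -/
def IsSSYT (R C : ℕ) (r : ℕ → ℕ) (n : ℕ) (c : ℕ → ℕ) (T : ℕ → ℕ → ℕ) : Prop :=
  (∀ a ∈ Finset.Icc 1 R, ∀ b ∈ Finset.Icc 1 (r a), 1 ≤ T a b ∧ T a b ≤ n) ∧
  (∀ a ∈ Finset.Icc 1 R, ∀ b b' : ℕ, 1 ≤ b → b ≤ b' → b' ≤ r a → T a b ≤ T a b') ∧
  (∀ a : ℕ, 1 ≤ a → a + 1 ≤ R → ∀ b : ℕ, 1 ≤ b → b ≤ r a → b ≤ r (a + 1) →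
    T a b < T (a + 1) b) ∧
  (∀ i : ℕ, 1 ≤ i → i ≤ n →
    ((Finset.Icc 1 R ×ˢ Finset.Icc 1 C).filter
      (fun q => q.2 ≤ r q.1 ∧ T q.1 q.2 = i)).card = c i)

/-- Row lengths of the shape `ϱ = (ℓ^{2k}, p, p)`: rows `1, ..., 2k` have length `ℓ`
and rows `2k+1`, `2k+2` have length `p`. -/
def rhoRow (l k p : ℕ) (a : ℕ) : ℕ := if a ≤ 2 * k then l else p

/-- A semistandard Young tableau of shape `ϱ = (ℓ^{2k}, p, p)` with content
`(c 1, ..., c n)`. -/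
def IsRhoSSYT (l k p n : ℕ) (c : ℕ → ℕ) (T : ℕ → ℕ → ℕ) : Prop :=
  IsSSYT (2 * k + 2) l (rhoRow l k p) n c T

/-- A tableau of shape `ϱ = (ℓ^{2k}, p, p)` is proper if `T (q+2) 1 ≥ T q ℓ`
for all `1 ≤ q ≤ 2k`. -/
def IsProper (l k : ℕ) (T : ℕ → ℕ → ℕ) : Prop :=
  ∀ q : ℕ, 1 ≤ q → q ≤ 2 * k → T q l ≤ T (q + 2) 1

/-- Two fillings agree on every box of the shape with row lengths `r` and `R` rows. -/
def EqOnShape (R : ℕ) (r : ℕ → ℕ) (T T' : ℕ → ℕ → ℕ) : Prop :=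
  ∀ a ∈ Finset.Icc 1 R, ∀ b ∈ Finset.Icc 1 (r a), T a b = T' a b

/-- The content `(c 1, ..., c n)` is `ℓ`-maximal if at least `n - 3` of the
amounts `c i` equal `ℓ`. -/
def IsMaximal (l n : ℕ) (c : ℕ → ℕ) : Prop :=
  n - 3 ≤ ((Finset.Icc 1 n).filter (fun i => c i = l)).card

/-- A filling is normalized if it vanishes outside the boxes of the shape. -/
def Normalized (R : ℕ) (r : ℕ → ℕ) (T : ℕ → ℕ → ℕ) : Prop :=
  ∀ a b : ℕ, ¬ (1 ≤ a ∧ a ≤ R ∧ 1 ≤ b ∧ b ≤ r a) → T a b = 0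

open Finset

def stepFilling (f : ℕ → ℕ) (a b : ℕ) : ℕ := if b ≤ f a then a else a + 1

lemma stepFilling_eq_or_eq (f : ℕ → ℕ) (a b : ℕ) :
    stepFilling f a b = a ∨ stepFilling f a b = a + 1 := by
  unfold stepFilling
  split_ifs <;> simp

def stepContent (h w : ℕ) (f : ℕ → ℕ) (i : ℕ) : ℕ :=
  (if i ∈ Icc 1 h then f i else 0) + (if i - 1 ∈ Icc 1 h then w - f (i - 1) else 0)

lemma card_filter_rectangle_eq_sum (h w i : ℕ) (T : ℕ → ℕ → ℕ) :
    #((Icc 1 h ×ˢ Icc 1 w).filter (fun q => q.2 ≤ w ∧ T q.1 q.2 = i)) =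
      ∑ a ∈ Icc 1 h, #((Icc 1 w).filter (fun b => T a b = i)) := by
  rw [card_filter, sum_product]
  refine sum_congr rfl fun a _ => ?_
  rw [card_filter]
  refine sum_congr rfl fun b hb => ?_
  simp [(mem_Icc.mp hb).2]

lemma card_filter_stepFilling_row {w a : ℕ} {f : ℕ → ℕ} (hfa : f a ≤ w) (i : ℕ) :
    #((Icc 1 w).filter (fun b => stepFilling f a b = i)) =
      (if a = i then f a else 0) + (if a + 1 = i then w - f a else 0) := by
  by_cases hai : a = i
  · subst hai
    have hrow : (Icc 1 w).filter (fun b => stepFilling f a b = a) = Icc 1 (f a) := by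
      ext b
      rw [mem_filter, mem_Icc, mem_Icc, stepFilling]
      split_ifs <;> omega
    simp [hrow]
  by_cases hai' : a + 1 = i
  · subst hai'
    have hrow : (Icc 1 w).filter (fun b => stepFilling f a b = a + 1) = Ioc (f a) w := by
      ext b
      rw [mem_filter, mem_Icc, mem_Ioc, stepFilling]
      split_ifs <;> omega
    simp [hrow]
  have hrow : (Icc 1 w).filter (fun b => stepFilling f a b = i) = ∅ := by
    ext b
    rw [mem_filter, mem_Icc, stepFilling]
    simp only [notMem_empty, iff_false]
    split_ifs <;> omega
  simp [hrow, hai, hai']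

lemma card_filter_stepFilling {h w : ℕ} {f : ℕ → ℕ} (hf : ∀ a ∈ Icc 1 h, f a ≤ w) (i : ℕ) :
    #((Icc 1 h ×ˢ Icc 1 w).filter (fun q => q.2 ≤ w ∧ stepFilling f q.1 q.2 = i)) =
      stepContent h w f i := by
  rw [card_filter_rectangle_eq_sum, sum_congr rfl fun a ha => card_filter_stepFilling_row (hf a ha) i,
    sum_add_distrib, stepContent, sum_ite_eq', ← sum_ite_eq' (Icc 1 h) (i - 1) (fun a => w - f a)]
  congr 1
  refine sum_congr rfl fun a ha => ?_
  have hai : a + 1 = i ↔ a = i - 1 := by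
    rw [mem_Icc] at ha
    omega
  simp only [hai]

lemma isSSYT_stepFilling {h w : ℕ} {f d : ℕ → ℕ} (hf : ∀ a ∈ Icc 1 h, f a ≤ w)
    (hanti : ∀ a, 1 ≤ a → a + 1 ≤ h → f (a + 1) ≤ f a)
    (hd : ∀ i ∈ Icc 1 (h + 1), stepContent h w f i = d i) :
    IsSSYT h w (fun _ => w) (h + 1) d (stepFilling f) := by
  refine ⟨?_, ?_, ?_, fun i hi1 hi2 => ?_⟩
  · intro a ha b _
    rw [mem_Icc] at ha
    unfold stepFilling
    split_ifs <;> omega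
  · intro a _ b b' _ hbb' _
    unfold stepFilling
    split_ifs <;> omega
  · intro a ha1 ha2 b _ hb _
    have := hanti a ha1 ha2
    unfold stepFilling
    split_ifs <;> omega
  · rw [card_filter_stepFilling hf]
    exact hd i (mem_Icc.mpr ⟨hi1, hi2⟩)

lemma eqOn_of_stepContent_eq {h w : ℕ} {f g : ℕ → ℕ} (hf : ∀ a ∈ Icc 1 h, f a ≤ w)
    (hg : ∀ a ∈ Icc 1 h, g a ≤ w)
    (hfg : ∀ i ∈ Icc 1 h, stepContent h w f i = stepContent h w g i) :
    ∀ a ∈ Icc 1 h, f a = g a := by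
  intro a ha
  rw [mem_Icc] at ha
  induction a, ha.1 using Nat.le_induction with
  | base => simpa [stepContent, ha.2] using hfg 1 (by simp [ha.2])
  | succ a ha1 ih =>
    have hprev := ih ⟨ha1, by omega⟩
    have hstep := hfg (a + 1) (by simp [ha.2])
    have hfa := hf a (mem_Icc.mpr ⟨ha1, by omega⟩)
    have hga := hg a (mem_Icc.mpr ⟨ha1, by omega⟩)
    simp only [stepContent, mem_Icc, Nat.add_sub_cancel] at hstep
    split_ifs at hstep <;> omega

lemma le_card_filter_iff {w b : ℕ} {p : ℕ → Prop} [DecidablePred p]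
    (hp : ∀ b b', 1 ≤ b → b ≤ b' → b' ≤ w → p b' → p b) (hb : b ∈ Icc 1 w) :
    b ≤ #((Icc 1 w).filter p) ↔ p b := by
  rw [mem_Icc] at hb
  constructor
  · intro hle
    by_contra hpb
    have hsub : (Icc 1 w).filter p ⊆ Icc 1 (b - 1) := by
      intro x hx
      rw [mem_filter, mem_Icc] at hx
      rw [mem_Icc]
      by_contra hxb
      exact hpb (hp b x hb.1 (by omega) hx.1.2 hx.2)
    have := card_le_card hsub
    simp only [Nat.card_Icc] at this
    omega
  · intro hpb
    have hsub : Icc 1 b ⊆ (Icc 1 w).filter p := by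
      intro x hx
      rw [mem_Icc] at hx
      rw [mem_filter, mem_Icc]
      exact ⟨⟨hx.1, by omega⟩, hp x b hx.1 hx.2 hb.2 hpb⟩
    simpa using card_le_card hsub

namespace IsSSYT

variable {h w : ℕ} {c : ℕ → ℕ} {T : ℕ → ℕ → ℕ}

lemma le_apply (hT : IsSSYT h w (fun _ => w) (h + 1) c T) {a b : ℕ} (ha : a ∈ Icc 1 h)
    (hb : b ∈ Icc 1 w) : a ≤ T a b := by
  rw [mem_Icc] at ha hb
  induction a, ha.1 using Nat.le_induction with
  | base => exact (hT.1 1 (by simp [ha.2]) b (by simp [hb.1, hb.2])).1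
  | succ a ha1 ih =>
    have := hT.2.2.1 a ha1 ha.2 b hb.1 hb.2 hb.2
    have := ih ⟨ha1, by omega⟩
    omega

lemma apply_le_succ (hT : IsSSYT h w (fun _ => w) (h + 1) c T) {a b : ℕ} (ha : a ∈ Icc 1 h)
    (hb : b ∈ Icc 1 w) : T a b ≤ a + 1 := by
  rw [mem_Icc] at ha hb
  refine Nat.decreasingInduction (motive := fun a _ => 1 ≤ a → T a b ≤ a + 1)
    (fun a hah ih ha1 => ?_) (fun hh => ?_) ha.2 ha.1
  · have := hT.2.2.1 a ha1 hah b hb.1 hb.2 hb.2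
    have := ih (by omega)
    omega
  · exact (hT.1 h (by simp [hh]) b (by simp [hb.1, hb.2])).2

lemma eqOnShape_stepFilling_card (hT : IsSSYT h w (fun _ => w) (h + 1) c T) :
    EqOnShape h (fun _ => w) T
      (stepFilling fun a => #((Icc 1 w).filter (fun b => T a b = a))) := by
  intro a ha b hb
  have hdown : ∀ b b', 1 ≤ b → b ≤ b' → b' ≤ w → T a b' = a → T a b = a := by
    intro b b' hb1 hbb' hb'
    have := hT.2.1 a ha b b' hb1 hbb' hb'
    have := hT.le_apply ha (b := b) (mem_Icc.mpr ⟨hb1, by omega⟩)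
    omega
  have hlow := hT.le_apply ha hb
  have hhigh := hT.apply_le_succ ha hb
  have hiff := le_card_filter_iff hdown hb
  simp only [stepFilling]
  split_ifs <;> omega

lemma eqOnShape_stepFilling (hT : IsSSYT h w (fun _ => w) (h + 1) c T) {f : ℕ → ℕ}
    (hf : ∀ a ∈ Icc 1 h, f a ≤ w) (hc : ∀ i ∈ Icc 1 h, stepContent h w f i = c i) :
    EqOnShape h (fun _ => w) T (stepFilling f) := by
  set g : ℕ → ℕ := fun a => #((Icc 1 w).filter (fun b => T a b = a))
  have hTg : EqOnShape h (fun _ => w) T (stepFilling g) := hT.eqOnShape_stepFilling_card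
  have hg : ∀ a ∈ Icc 1 h, g a ≤ w := fun a _ =>
    (card_filter_le _ _).trans (by simp)
  have hgc : ∀ i ∈ Icc 1 h, stepContent h w g i = c i := by
    intro i hi
    rw [mem_Icc] at hi
    rw [← card_filter_stepFilling hg, ← hT.2.2.2 i hi.1 (by omega)]
    congr 1
    refine filter_congr fun q hq => ?_
    rw [mem_product] at hq
    rw [hTg q.1 hq.1 q.2 hq.2]
  have hfg := eqOn_of_stepContent_eq hf hg fun i hi => (hc i hi).trans (hgc i hi).symm
  intro a ha b hb
  rw [hTg a ha b hb]
  simp only [stepFilling, hfg a ha]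

end IsSSYT

/-- Letters `≤ a` fill rows `1, …, a - 1` and the first `leadingCount w d a` boxes of row `a`. -/
def leadingCount (w : ℕ) (d : ℕ → ℕ) (a : ℕ) : ℕ := ∑ j ∈ Icc 1 a, d j - (a - 1) * w

section PartialSums

variable {w h : ℕ} {d : ℕ → ℕ} (hbd : ∀ i : ℕ, 1 ≤ i → i ≤ h + 1 → d i ≤ w)
include hbd

lemma sum_Icc_le_mul {a : ℕ} (ha : a ≤ h + 1) : ∑ j ∈ Icc 1 a, d j ≤ a * w := by
  simpa using sum_le_card_nsmul (Icc 1 a) d w fun j hj => by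
    rw [mem_Icc] at hj
    exact hbd j hj.1 (by omega)

lemma leadingCount_le {a : ℕ} (ha : a ∈ Icc 1 h) : leadingCount w d a ≤ w := by
  rw [mem_Icc] at ha
  obtain ⟨k, rfl⟩ : ∃ k, a = k + 1 := ⟨a - 1, by omega⟩
  have := sum_Icc_le_mul hbd (a := k + 1) (by omega)
  simp only [leadingCount, Nat.add_sub_cancel, add_one_mul] at this ⊢
  omega

variable (hsum : ∑ i ∈ Icc 1 (h + 1), d i = w * h)
include hsum

lemma sub_one_mul_le_sum_Icc {a : ℕ} (ha : a ≤ h + 1) : (a - 1) * w ≤ ∑ j ∈ Icc 1 a, d j := by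
  rcases Nat.eq_zero_or_pos a with rfl | ha1
  · simp
  have hsplit : ∑ j ∈ Icc 1 a, d j + ∑ j ∈ Ioc a (h + 1), d j = w * h := by
    have hIoc : ∀ n, Icc 1 n = Ioc 0 n := Icc_add_one_left_eq_Ioc 0
    rw [← hsum, hIoc, hIoc]
    exact sum_Ioc_consecutive d (Nat.zero_le a) ha
  have htail : ∑ j ∈ Ioc a (h + 1), d j ≤ (h + 1 - a) * w := by
    simpa using sum_le_card_nsmul (Ioc a (h + 1)) d w fun j hj => by
      rw [mem_Ioc] at hj
      exact hbd j (by omega) hj.2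
  have htotal : (a - 1) * w + (h + 1 - a) * w = w * h := by
    rw [← add_mul, mul_comm]
    congr 1
    omega
  omega

lemma leadingCount_succ_le {a : ℕ} (ha1 : 1 ≤ a) (ha2 : a + 1 ≤ h) :
    leadingCount w d (a + 1) ≤ leadingCount w d a := by
  obtain ⟨k, rfl⟩ : ∃ k, a = k + 1 := ⟨a - 1, by omega⟩
  have hS : ∑ j ∈ Icc 1 (k + 1 + 1), d j = ∑ j ∈ Icc 1 (k + 1), d j + d (k + 2) :=
    sum_Icc_succ_top (by omega) d
  have hlow : k * w ≤ ∑ j ∈ Icc 1 (k + 1), d j := by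
    simpa using sub_one_mul_le_sum_Icc hbd hsum (a := k + 1) (by omega)
  have hd := hbd (k + 2) (by omega) (by omega)
  simp only [leadingCount, Nat.add_sub_cancel, add_one_mul]
  omega

lemma stepContent_leadingCount :
    ∀ i ∈ Icc 1 (h + 1), stepContent h w (leadingCount w d) i = d i := by
  intro i hi
  rw [mem_Icc] at hi
  obtain ⟨j, rfl⟩ : ∃ j, i = j + 1 := ⟨i - 1, by omega⟩
  have hS : ∑ k ∈ Icc 1 (j + 1), d k = ∑ k ∈ Icc 1 j, d k + d (j + 1) :=
    sum_Icc_succ_top (by omega) d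
  have hlow : j * w ≤ ∑ k ∈ Icc 1 (j + 1), d k := by
    simpa using sub_one_mul_le_sum_Icc hbd hsum (a := j + 1) hi.2
  have hup := sum_Icc_le_mul hbd (a := j) (by omega)
  have htop : j = h → ∑ k ∈ Icc 1 (j + 1), d k = j * w := by
    rintro rfl
    rw [hsum, mul_comm]
  simp only [stepContent, leadingCount, mem_Icc, Nat.add_sub_cancel]
  rcases j with _ | k
  · simp only [zero_add, zero_mul, Icc_self, sum_singleton] at htop ⊢
    split_ifs <;> omega
  · have hprev : k * w ≤ ∑ j ∈ Icc 1 (k + 1), d j := by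
      simpa using sub_one_mul_le_sum_Icc hbd hsum (a := k + 1) (by omega)
    simp only [Nat.add_sub_cancel, add_one_mul] at hup hlow htop ⊢
    split_ifs <;> omega

end PartialSums

theorem stmt6_general (w h : ℕ) (d : ℕ → ℕ)
    (hbd : ∀ i : ℕ, 1 ≤ i → i ≤ h + 1 → d i ≤ w)
    (hsum : ∑ i ∈ Finset.Icc 1 (h + 1), d i = w * h) :
    ∃ T : ℕ → ℕ → ℕ,
      IsSSYT h w (fun _ => w) (h + 1) d T ∧
      (∀ a ∈ Finset.Icc 1 h, ∀ b ∈ Finset.Icc 1 w, T a b = a ∨ T a b = a + 1) ∧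
      ∀ T' : ℕ → ℕ → ℕ, IsSSYT h w (fun _ => w) (h + 1) d T' →
        EqOnShape h (fun _ => w) T' T := by
  have hle : ∀ a ∈ Icc 1 h, leadingCount w d a ≤ w := fun _ => leadingCount_le hbd
  have hcontent := stepContent_leadingCount hbd hsum
  refine ⟨stepFilling (leadingCount w d),
    isSSYT_stepFilling hle (fun _ => leadingCount_succ_le hbd hsum) hcontent,
    fun a _ b _ => stepFilling_eq_or_eq _ a b, fun T' hT' => ?_⟩
  exact hT'.eqOnShape_stepFilling hle fun i hi =>
    hcontent i (Icc_subset_Icc_right h.le_succ hi)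

/-- For a rectangle `(w^h)` and weakly decreasing content `(d 1, ..., d (h+1))`
with all `d i ≤ w` and total `w * h`, there is exactly one semistandard Young
tableau, and in it the only values in row `i` are `i` and `i + 1`. -/
theorem stmt6 (w h : ℕ) (hw : 1 ≤ w) (hh : 1 ≤ h) (d : ℕ → ℕ)
    (hbd : ∀ i : ℕ, 1 ≤ i → i ≤ h + 1 → d i ≤ w)
    (hmono : ∀ i j : ℕ, 1 ≤ i → i ≤ j → j ≤ h + 1 → d j ≤ d i)
    (hsum : ∑ i ∈ Finset.Icc 1 (h + 1), d i = w * h) :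
    ∃ T : ℕ → ℕ → ℕ,
      IsSSYT h w (fun _ => w) (h + 1) d T ∧
      (∀ a ∈ Finset.Icc 1 h, ∀ b ∈ Finset.Icc 1 w, T a b = a ∨ T a b = a + 1) ∧
      ∀ T' : ℕ → ℕ → ℕ, IsSSYT h w (fun _ => w) (h + 1) d T' →
        EqOnShape h (fun _ => w) T' T :=
  stmt6_general w h d hbd hsum
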